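/- arXiv:1104.3173 — 2 statements merged into one kernel-verified Lean document; each statement's English description precedes it below -/
import Mathlib

section
/- There exists an inverse system indexed by $\omega_1$ of nonempty sets $S_\alpha$ with surjective transition maps $f_{\alpha\beta}: S_\beta \to S_\alpha$ for $\alpha \le \beta < \omega_1$, whose inverse limit is empty. -/
universe u v

/-- The first uncountable ordinal `ω₁`, as a linearly ordered index type. -/
def Omega1 : Type 1 := {o : Ordinal.{0} // o < (Cardinal.aleph 1).ord}

noncomputable instance : LinearOrder Omega1 := by unfold Omega1; infer_instance

/-- The inverse limit of an inverse system of modules, realized as the submodule of the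
direct product consisting of the compatible families. -/
def invLim {R : Type u} [Ring R] {ι : Type v} [Preorder ι] (P : ι → Type u)
    [∀ i, AddCommGroup (P i)] [∀ i, Module R (P i)]
    (φ : ∀ i j : ι, i ≤ j → (P j →ₗ[R] P i)) : Submodule R (∀ i, P i) where
  carrier := {x | ∀ (i j : ι) (h : i ≤ j), φ i j h (x j) = x i}
  zero_mem' := by intro i j h; simp
  add_mem' := by intro a b ha hb i j h; simp [ha i j h, hb i j h]
  smul_mem' := by intro c a ha i j h; simp [ha i j h]

/-!
Take for `S α` the injections `α → ℕ` with infinite co-range, and restrictions as transition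
maps. The infinitely many unused values let an injection on a countable set extend to any countable
superset, so the transition maps are onto; but a point of the inverse limit would glue to an
injection `ω₁ → ℕ`.
-/

open Set Function Cardinal

def CoinfiniteEmbedding (α : Type*) : Type _ := {g : α ↪ ℕ // (range g)ᶜ.Infinite}

namespace CoinfiniteEmbedding

variable {κ : Type*}

def restrict {s t : Set κ} (h : s ⊆ t) (g : CoinfiniteEmbedding t) : CoinfiniteEmbedding s :=
  ⟨(embeddingOfSubset s t h).trans g.1,
    g.2.mono (compl_subset_compl.2 (range_comp_subset_range (embeddingOfSubset s t h) g.1))⟩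

theorem restrict_rfl {s : Set κ} (g : CoinfiniteEmbedding s) : restrict subset_rfl g = g := rfl

theorem restrict_restrict {s t u : Set κ} (hst : s ⊆ t) (htu : t ⊆ u)
    (g : CoinfiniteEmbedding u) : restrict hst (restrict htu g) = restrict (hst.trans htu) g := rfl

theorem restrict_surjective {s t : Set κ} (h : s ⊆ t) [Countable t] :
    Surjective (restrict h) := by
  classical
  rintro ⟨g, hg⟩
  obtain ⟨k, hk⟩ := exists_injective_nat t
  -- Off `s`, use the even-indexed points of an enumeration of the gaps of `g`; the odd-indexed
  -- ones stay outside the range.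
  let j : ℕ ↪ ((range g)ᶜ : Set ℕ) := hg.natEmbedding _
  have hj : Injective fun n => (j n : ℕ) := Subtype.val_injective.comp j.injective
  let G : t → ℕ := fun x => if hx : (x : κ) ∈ s then g ⟨x, hx⟩ else j (2 * k x)
  have hG : Injective G := by
    refine Injective.dite (fun x : t => (x : κ) ∈ s) (f := fun y => g ⟨y.1, y.2⟩)
      (f' := fun y => j (2 * k y.1)) ?_ ?_ ?_
    · intro x y hxy
      exact Subtype.ext <| Subtype.ext <| by simpa using g.injective hxy
    · intro x y hxy
      exact Subtype.ext (hk (by simpa using hj hxy))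
    · intro x x' hx hx' hxx'
      exact (j (2 * k x')).2 ⟨_, hxx'⟩
  have hodd : range (fun n => (j (2 * n + 1) : ℕ)) ⊆ (range G)ᶜ := by
    rintro _ ⟨n, rfl⟩ ⟨x, hx⟩
    by_cases hxs : (x : κ) ∈ s
    · simp only [G, dif_pos hxs] at hx
      exact (j _).2 ⟨_, hx⟩
    · simp only [G, dif_neg hxs] at hx
      have := hj hx
      omega
  refine ⟨⟨⟨G, hG⟩, (infinite_range_of_injective ?_).mono hodd⟩, ?_⟩
  · exact hj.comp fun m n hmn => by simpa using hmn
  · exact Subtype.ext (DFunLike.ext _ _ fun x => by simp [restrict, G, x.2])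

theorem nonempty {t : Set κ} [Countable t] : Nonempty (CoinfiniteEmbedding t) :=
  let empty : CoinfiniteEmbedding (∅ : Set κ) := ⟨Embedding.ofIsEmpty, by
    rw [range_eq_empty, compl_empty]; exact infinite_univ⟩
  (restrict_surjective (empty_subset t) empty).nonempty

end CoinfiniteEmbedding

theorem countable_of_compatible_embeddings {ι κ : Type*} [Preorder ι] [IsDirectedOrder ι]
    [NoMaxOrder ι] [Preorder κ] (e : ι ↪o κ) (x : ∀ a : ι, Iio (e a) ↪ ℕ)
    (hx : ∀ (a b : ι) (h : a ≤ b) (t : Iio (e a)),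
      x b (inclusion (Iio_subset_Iio (e.monotone h)) t) = x a t) :
    Countable ι := by
  choose above h_above using fun t : ι => exists_gt t
  refine Injective.countable (f := fun t => x (above t) ⟨e t, e.strictMono (h_above t)⟩)
    fun t₁ t₂ heq => ?_
  obtain ⟨d, hd₁, hd₂⟩ := directed_of (· ≤ ·) (above t₁) (above t₂)
  dsimp only at heq
  rw [← hx _ d hd₁, ← hx _ d hd₂] at heq
  simpa using (x d).injective heq

theorem countable_Iio_toType_ord_aleph_one (i : (aleph 1).ord.ToType) : (Iio i).Countable := by
  rw [← le_aleph0_iff_set_countable, ← lt_aleph_one_iff]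
  simpa using mk_Iio_lt i

namespace Omega1

noncomputable def orderIsoToType : Omega1 ≃o (aleph 1).ord.ToType := Ordinal.ToType.mk

instance : Uncountable Omega1 := by
  rw [← not_countable_iff, ← Cardinal.mk_le_aleph0_iff, ← lt_aleph_one_iff]
  change ¬ #(Iio (aleph 1).ord) < aleph 1
  simp

instance : NoMaxOrder Omega1 where
  exists_gt a := ⟨⟨Order.succ a.1, (isSuccLimit_ord (aleph0_le_aleph 1)).succ_lt a.2⟩,
    Order.lt_succ a.1⟩

end Omega1

open CoinfiniteEmbedding in
/-- There exists an inverse system, indexed by the first uncountable ordinal `ω₁`, of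
nonempty sets with surjective transition maps, whose inverse limit is empty. -/
theorem exists_omega1_system_empty_limit :
    ∃ (S : Omega1 → Type) (f : ∀ a b : Omega1, a ≤ b → S b → S a),
      (∀ a, Nonempty (S a)) ∧
      (∀ (a : Omega1) (x : S a), f a a le_rfl x = x) ∧
      (∀ (a b c : Omega1) (hab : a ≤ b) (hbc : b ≤ c) (x : S c),
        f a b hab (f b c hbc x) = f a c (hab.trans hbc) x) ∧
      (∀ (a b : Omega1) (h : a ≤ b), Function.Surjective (f a b h)) ∧
      IsEmpty {x : ∀ a, S a // ∀ (a b : Omega1) (h : a ≤ b), f a b h (x b) = x a} := by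
  -- Index by initial segments of a model of `ω₁` in `Type`, so that `S` lands in `Type`.
  let e := Omega1.orderIsoToType.toOrderEmbedding
  have (a : Omega1) : Countable (Iio (e a)) := (countable_Iio_toType_ord_aleph_one _).to_subtype
  refine ⟨fun a => CoinfiniteEmbedding (Iio (e a)),
    fun a b h => restrict (Iio_subset_Iio (e.monotone h)), fun _ => nonempty,
    fun _ => restrict_rfl, fun _ _ _ _ _ => restrict_restrict _ _,
    fun _ _ _ => restrict_surjective _, ⟨fun ⟨x, hx⟩ => ?_⟩⟩
  exact not_countable <| countable_of_compatible_embeddings e (fun a => (x a).1)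
    fun a b h t => congrArg (fun g : CoinfiniteEmbedding (Iio (e a)) => g.1 t) (hx a b h)
end

section
/- Let $R$ be a ring, $\mathbf{M}$ a class of left $R$-modules closed under arbitrary direct sums, and $0 \to A \to M \to N$ an exact sequence with $M, N \in \mathbf{M}$. Then $A$ can be written as the inverse limit of an $\omega_1$-indexed system of modules in $\mathbf{M}$ with surjective transition maps, provided there exists an $\omega_1$-indexed inverse system of nonempty sets with surjective transition maps and empty inverse limit. -/
universe u v

/-!
Fix points `p_a ∈ S_a` and let `Q_a = {(m, n) ∈ M × N^(S_a) | f m = ∑ n}`, the pullback of `f`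
along summation. Splitting off the coordinate `p_a` gives `Q_a ≅ M ⊕ N^(S_a ∖ {p_a})`, a direct
sum of copies of `M` and `N`, and the surjections `S_b → S_a` induce surjections `Q_b → Q_a`.
In a thread `(m_a, n_a)` of this system `m_a` is constant. The supports of the `n_b`, pushed down
to `S_a`, form a subsystem of finite sets (an increasing `ω₁`-chain of finite sets is eventually
constant, as countable subsets of `ω₁` are bounded), so if some `n_a` were nonzero, König's lemma
would produce a thread of `S`. Hence all `n_a` vanish, `f m = 0`, and the limit is `ker f ≅ A`.
-/

section CountablyDirected

variable {ι : Type*} [Preorder ι] (hseq : ∀ s : ℕ → ι, BddAbove (Set.range s))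
include hseq

theorem bddAbove_range_of_monotone_nat {u : ι → ℕ} (hu : Monotone u) :
    BddAbove (Set.range u) := by
  by_contra h
  simp only [not_bddAbove_iff, Set.exists_range_iff] at h
  choose s hs using h
  obtain ⟨b, hb⟩ := hseq s
  exact (hs (u b)).not_ge (hu (hb ⟨u b, rfl⟩))

theorem Set.finite_iUnion_of_monotone [IsDirectedOrder ι] [Nonempty ι] {γ : Type*}
    {D : ι → Set γ} (hD : Monotone D) (hfin : ∀ b, (D b).Finite) : (⋃ b, D b).Finite := by
  have hcard : Monotone fun b => (D b).ncard := fun b c h => Set.ncard_le_ncard (hD h) (hfin c)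
  have hbdd := bddAbove_range_of_monotone_nat hseq hcard
  obtain ⟨b₀, hb₀⟩ := Nat.sSup_mem (Set.range_nonempty _) hbdd
  have hmax : ∀ b, (D b).ncard ≤ (D b₀).ncard := fun b =>
    (le_csSup hbdd ⟨b, rfl⟩).trans_eq hb₀.symm
  refine (hfin b₀).subset (Set.iUnion_subset fun b => ?_)
  obtain ⟨c, hbc, hb₀c⟩ := exists_ge_ge b b₀
  exact (hD hbc).trans (Set.eq_of_subset_of_ncard_le (hD hb₀c) (hmax c) (hfin c)).ge

end CountablyDirected

instance : Nonempty Omega1 := ⟨⟨0, Cardinal.ord_aleph 1 ▸ Ordinal.omega_pos 1⟩⟩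

theorem Omega1.bddAbove_range (s : ℕ → Omega1) : BddAbove (Set.range s) := by
  refine ⟨⟨⨆ k, (s k).1, ?_⟩, ?_⟩
  · have hs := fun k => (s k).2
    simp only [Cardinal.ord_aleph] at hs ⊢
    exact Ordinal.iSup_lt_omega_one hs
  · rintro _ ⟨k, rfl⟩
    exact Ordinal.le_iSup (fun k => (s k).1) k

section Threads

open CategoryTheory

variable {ι : Type*} [Preorder ι] [IsDirectedOrder ι] {S : ι → Type*}
  (Sf : ∀ a b : ι, a ≤ b → S b → S a)

theorem exists_thread_of_finite_subsystem (hid : ∀ (a : ι) (x : S a), Sf a a le_rfl x = x)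
    (hcomp : ∀ (a b c : ι) (hab : a ≤ b) (hbc : b ≤ c) (x : S c),
      Sf a b hab (Sf b c hbc x) = Sf a c (hab.trans hbc) x)
    (T : ∀ a, Set (S a)) (hfin : ∀ a, (T a).Finite) (hne : ∀ a, (T a).Nonempty)
    (hmaps : ∀ a b (h : a ≤ b), Set.MapsTo (Sf a b h) (T b) (T a)) :
    ∃ x : ∀ a, S a, ∀ a b (h : a ≤ b), Sf a b h (x b) = x a := by
  let F : ιᵒᵖ ⥤ Type _ :=
    { obj j := T j.unop
      map φ := TypeCat.ofHom fun s => ⟨_, hmaps _ _ (leOfHom φ.unop) s.2⟩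
      map_id j := by ext s; exact hid j.unop s.1
      map_comp φ ψ := by ext s; exact (hcomp _ _ _ (leOfHom ψ.unop) (leOfHom φ.unop) s.1).symm }
  have : ∀ j, Finite (F.obj j) := fun j => (hfin j.unop).to_subtype
  have : ∀ j, Nonempty (F.obj j) := fun j => (hne j.unop).to_subtype
  obtain ⟨u, hu⟩ := nonempty_sections_of_finite_inverse_system F
  exact ⟨fun a => (u (.op a)).1, fun a b h => congrArg Subtype.val (hu (homOfLE h).op)⟩

end Threads

section Vanishing

variable {ι : Type*} [Preorder ι] [IsDirectedOrder ι] {S : ι → Type*}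
  (Sf : ∀ a b : ι, a ≤ b → S b → S a) {N : Type*} [AddCommMonoid N]

theorem eq_zero_of_mapDomain_compatible (hseq : ∀ s : ℕ → ι, BddAbove (Set.range s))
    (hid : ∀ (a : ι) (x : S a), Sf a a le_rfl x = x)
    (hcomp : ∀ (a b c : ι) (hab : a ≤ b) (hbc : b ≤ c) (x : S c),
      Sf a b hab (Sf b c hbc x) = Sf a c (hab.trans hbc) x)
    (hempty : IsEmpty {x : ∀ a, S a // ∀ (a b : ι) (h : a ≤ b), Sf a b h (x b) = x a})
    (n : ∀ a, S a →₀ N) (hn : ∀ a b (h : a ≤ b), Finsupp.mapDomain (Sf a b h) (n b) = n a)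
    (a₀ : ι) : n a₀ = 0 := by
  classical
  by_contra hna₀
  have hsupp : ∀ b c (h : b ≤ c), ((n b).support : Set (S b)) ⊆ Sf b c h '' (n c).support := by
    intro b c h
    rw [← hn b c h, ← Finset.coe_image]
    exact Finset.coe_subset.2 Finsupp.mapDomain_support
  let D : ∀ a, ι → Set (S a) := fun a b => ⋃ h : a ≤ b, Sf a b h '' (n b).support
  have hD : ∀ a, Monotone (D a) := by
    rintro a b c hbc s hs
    simp only [D, Set.mem_iUnion, Set.mem_image] at hs ⊢
    obtain ⟨hab, t, ht, rfl⟩ := hs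
    obtain ⟨u, hu, rfl⟩ := hsupp b c hbc ht
    exact ⟨hab.trans hbc, u, hu, (hcomp a b c hab hbc u).symm⟩
  let reach : ∀ a, Set (S a) := fun a => ⋃ b, D a b
  have hfin : ∀ a, (reach a).Finite := fun a =>
    have : Nonempty ι := ⟨a⟩
    Set.finite_iUnion_of_monotone hseq (hD a)
      fun b => Set.finite_iUnion fun _ => (n b).support.finite_toSet.image _
  have hne : ∀ a, (reach a).Nonempty := by
    intro a
    obtain ⟨c, hac, ha₀c⟩ := exists_ge_ge a a₀
    obtain ⟨t, ht⟩ : (n c).support.Nonempty := by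
      rw [Finsupp.support_nonempty_iff]
      rintro hc
      exact hna₀ (by rw [← hn a₀ c ha₀c, hc, Finsupp.mapDomain_zero])
    exact ⟨_, Set.mem_iUnion.2 ⟨c, Set.mem_iUnion.2 ⟨hac, t, ht, rfl⟩⟩⟩
  have hmaps : ∀ a b (h : a ≤ b), Set.MapsTo (Sf a b h) (reach b) (reach a) := by
    intro a b hab s hs
    simp only [reach, D, Set.mem_iUnion, Set.mem_image] at hs ⊢
    obtain ⟨c, hbc, t, ht, rfl⟩ := hs
    exact ⟨c, hab.trans hbc, t, ht, (hcomp a b c hab hbc t).symm⟩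
  obtain ⟨x, hx⟩ := exists_thread_of_finite_subsystem Sf hid hcomp reach hfin hne hmaps
  exact hempty.false ⟨x, hx⟩

end Vanishing

section SumPullback

variable {R : Type*} [Ring R] {M N : Type*} [AddCommGroup M] [Module R M]
  [AddCommGroup N] [Module R N] (f : M →ₗ[R] N)

noncomputable def sumPullback (S : Type*) : Submodule R (M × (S →₀ N)) :=
  LinearMap.ker (f ∘ₗ LinearMap.fst R M (S →₀ N) -
    Finsupp.lsum ℕ (fun _ => LinearMap.id) ∘ₗ LinearMap.snd R M (S →₀ N))

variable {f}

theorem mem_sumPullback {S : Type*} {x : M × (S →₀ N)} :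
    x ∈ sumPullback f S ↔ f x.1 = x.2.sum fun _ n => n := by
  simp [sumPullback, sub_eq_zero]
  rfl

variable (f)

noncomputable def sumPullbackMap {S T : Type*} (φ : S → T) :
    sumPullback f S →ₗ[R] sumPullback f T :=
  (LinearMap.prodMap LinearMap.id (Finsupp.lmapDomain N R φ)).restrict fun x hx => by
    rw [mem_sumPullback] at hx ⊢
    simpa [Finsupp.sum_mapDomain_index] using hx

@[simp]
theorem coe_sumPullbackMap {S T : Type*} (φ : S → T) (x : sumPullback f S) :
    (sumPullbackMap f φ x : M × (T →₀ N)) = (x.1.1, Finsupp.mapDomain φ x.1.2) :=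
  rfl

theorem sumPullbackMap_id (S : Type*) : sumPullbackMap f (id : S → S) = LinearMap.id := by
  ext x : 2
  simp

theorem sumPullbackMap_comp {S T U : Type*} (φ : T → U) (χ : S → T) :
    sumPullbackMap f (φ ∘ χ) = sumPullbackMap f φ ∘ₗ sumPullbackMap f χ := by
  ext x : 2
  simp [Finsupp.mapDomain_comp]

theorem sumPullbackMap_surjective {S T : Type*} {φ : S → T} (hφ : φ.Surjective) :
    Function.Surjective (sumPullbackMap f φ) := by
  have h := sumPullbackMap_comp f φ (Function.surjInv hφ)
  rw [(Function.rightInverse_surjInv hφ).comp_eq_id, sumPullbackMap_id] at h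
  exact fun x => ⟨_, (LinearMap.congr_fun h x).symm⟩

noncomputable def sumPullbackEquiv {S : Type*} (p : S) :
    sumPullback f S ≃ₗ[R] M × (({p}ᶜ : Set S) →₀ N) := by
  refine .ofBijective ((LinearMap.fst R M _ ∘ₗ (sumPullback f S).subtype).prod
    (Finsupp.lsubtypeDomain {p}ᶜ ∘ₗ LinearMap.snd R M _ ∘ₗ (sumPullback f S).subtype)) ⟨?_, ?_⟩
  · rw [← LinearMap.ker_eq_bot, LinearMap.ker_eq_bot']
    rintro ⟨⟨m, n⟩, hx⟩ h
    obtain rfl : m = 0 := congrArg Prod.fst h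
    have hn : n.subtypeDomain (· ∈ ({p}ᶜ : Set S)) = 0 := congrArg Prod.snd h
    rw [Finsupp.subtypeDomain_eq_zero_iff'] at hn
    have hp : n p = 0 := by
      rw [mem_sumPullback, Finsupp.sum_eq_single p (fun s _ hs => hn s hs) (fun _ => rfl),
        map_zero] at hx
      exact hx.symm
    refine Subtype.ext (Prod.ext rfl (Finsupp.ext fun s => ?_))
    by_cases hs : s = p
    · simp [hs, hp]
    · simp [hn s hs]
  · rintro ⟨m, ν⟩
    let n := Finsupp.embDomain (Function.Embedding.subtype _) ν +
      Finsupp.single p (f m - ν.sum fun _ x => x)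
    have hn : (m, n) ∈ sumPullback f S := by
      rw [mem_sumPullback, Finsupp.sum_add_index' (fun _ => rfl) (fun _ _ _ => rfl),
        Finsupp.sum_embDomain, Finsupp.sum_single_index rfl, add_sub_cancel]
    refine ⟨⟨(m, n), hn⟩, Prod.ext rfl (Finsupp.ext fun s => ?_)⟩
    show n s = ν s
    have hs : (s : S) ≠ p := s.2
    rw [Finsupp.add_apply, Finsupp.single_eq_of_ne hs, add_zero]
    exact Finsupp.embDomain_apply_self _ ν s

end SumPullback

section Transport

variable {R : Type u} [Ring R] {ι : Type v} [Preorder ι] {Q P : ι → Type u}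
  [∀ a, AddCommGroup (Q a)] [∀ a, Module R (Q a)] [∀ a, AddCommGroup (P a)] [∀ a, Module R (P a)]
  (ψ : ∀ a b : ι, a ≤ b → (Q b →ₗ[R] Q a)) (e : ∀ a, Q a ≃ₗ[R] P a)

def transportSystem (a b : ι) (h : a ≤ b) : P b →ₗ[R] P a :=
  (e a).toLinearMap ∘ₗ ψ a b h ∘ₗ (e b).symm.toLinearMap

variable {ψ}

theorem transportSystem_id {a : ι} (hψ : ψ a a le_rfl = LinearMap.id) :
    transportSystem ψ e a a le_rfl = LinearMap.id := by
  ext x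
  simp [transportSystem, hψ]

theorem transportSystem_comp {a b c : ι} (hab : a ≤ b) (hbc : b ≤ c)
    (hψ : ψ a b hab ∘ₗ ψ b c hbc = ψ a c (hab.trans hbc)) :
    transportSystem ψ e a b hab ∘ₗ transportSystem ψ e b c hbc =
      transportSystem ψ e a c (hab.trans hbc) := by
  ext x
  simp [transportSystem, ← hψ]

theorem transportSystem_surjective {a b : ι} (h : a ≤ b) (hψ : Function.Surjective (ψ a b h)) :
    Function.Surjective (transportSystem ψ e a b h) :=
  (e a).surjective.comp (hψ.comp (e b).symm.surjective)

variable (ψ)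

noncomputable def invLimTransportEquiv :
    invLim Q ψ ≃ₗ[R] invLim P (transportSystem ψ e) where
  toFun x := ⟨fun a => e a (x.1 a), fun a b h => by simp [transportSystem, x.2 a b h]⟩
  invFun y := ⟨fun a => (e a).symm (y.1 a), fun a b h => by
    simpa [transportSystem] using congrArg (e a).symm (y.2 a b h)⟩
  map_add' x y := by ext; simp
  map_smul' r x := by ext; simp
  left_inv x := by ext; simp
  right_inv y := by ext; simp

end Transport

section KerEquiv

variable {R : Type u} [Ring R] {M N : Type u} [AddCommGroup M] [Module R M]
  [AddCommGroup N] [Module R N] (f : M →ₗ[R] N)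
  {ι : Type v} [Preorder ι] [IsDirectedOrder ι] [Nonempty ι] {S : ι → Type u}
  (Sf : ∀ a b : ι, a ≤ b → S b → S a)

noncomputable def kerToInvLimSumPullback :
    LinearMap.ker f →ₗ[R]
      invLim (fun a => sumPullback f (S a)) (fun a b h => sumPullbackMap f (Sf a b h)) :=
  LinearMap.codRestrict _
    (LinearMap.pi fun a => LinearMap.codRestrict (sumPullback f (S a))
      (LinearMap.inl R M _ ∘ₗ (LinearMap.ker f).subtype) fun m => by
        simp [mem_sumPullback])
    fun m a b h => Subtype.ext (Prod.ext rfl (Finsupp.mapDomain_zero (f := Sf a b h)))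

theorem kerToInvLimSumPullback_bijective (hseq : ∀ s : ℕ → ι, BddAbove (Set.range s))
    (hid : ∀ (a : ι) (x : S a), Sf a a le_rfl x = x)
    (hcomp : ∀ (a b c : ι) (hab : a ≤ b) (hbc : b ≤ c) (x : S c),
      Sf a b hab (Sf b c hbc x) = Sf a c (hab.trans hbc) x)
    (hempty : IsEmpty {x : ∀ a, S a // ∀ (a b : ι) (h : a ≤ b), Sf a b h (x b) = x a}) :
    Function.Bijective (kerToInvLimSumPullback f Sf) := by
  obtain ⟨a₀⟩ := ‹Nonempty ι›
  refine ⟨fun m m' h => Subtype.ext ?_, fun x => ?_⟩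
  · exact congrArg (fun x => (x.1 a₀).1.1) h
  have hx : ∀ a b (h : a ≤ b), (x.1 b).1.1 = (x.1 a).1.1 ∧
      Finsupp.mapDomain (Sf a b h) (x.1 b).1.2 = (x.1 a).1.2 := fun a b h =>
    Prod.ext_iff.1 (congrArg Subtype.val (x.2 a b h))
  have hzero : ∀ a, (x.1 a).1.2 = 0 :=
    eq_zero_of_mapDomain_compatible Sf hseq hid hcomp hempty _ fun a b h => (hx a b h).2
  have hconst : ∀ a, (x.1 a).1.1 = (x.1 a₀).1.1 := fun a => by
    obtain ⟨c, hac, ha₀c⟩ := exists_ge_ge a a₀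
    rw [← (hx a c hac).1, (hx a₀ c ha₀c).1]
  have hker : (x.1 a₀).1.1 ∈ LinearMap.ker f := by
    have h := mem_sumPullback.1 (x.1 a₀).2
    rwa [hzero, Finsupp.sum_zero_index] at h
  exact ⟨⟨_, hker⟩, Subtype.ext <| funext fun a =>
    Subtype.ext (Prod.ext (hconst a).symm (hzero a).symm)⟩

end KerEquiv

/-- Corollary (b): if `𝓜` is a class of left `R`-modules closed under arbitrary direct
sums, and `0 → A → M → N` is exact with `M, N ∈ 𝓜`, then (given an `ω₁`-indexed inverse
system of nonempty sets with surjective maps and empty limit) `A` is the inverse limit of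
an `ω₁`-indexed system of modules in `𝓜` with surjective transition maps. -/
theorem ker_eq_invLim_surjective (R : Type) [Ring R] (𝓜 : ModuleCat.{0} R → Prop)
    (hsum : ∀ (ι : Type) (G : ι → ModuleCat.{0} R), (∀ i, 𝓜 (G i)) →
      ∃ P : ModuleCat.{0} R, 𝓜 P ∧ Nonempty ((Π₀ i, ↥(G i)) ≃ₗ[R] ↥P))
    (A : Type) [AddCommGroup A] [Module R A]
    (M N : ModuleCat.{0} R) (hM : 𝓜 M) (hN : 𝓜 N)
    (f : M →ₗ[R] N) (g : A →ₗ[R] M)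
    (hg : Function.Injective g) (hexact : LinearMap.range g = LinearMap.ker f)
    (S : Omega1 → Type) (Sf : ∀ a b : Omega1, a ≤ b → S b → S a)
    (hne : ∀ a, Nonempty (S a))
    (hid : ∀ (a : Omega1) (x : S a), Sf a a le_rfl x = x)
    (hcomp : ∀ (a b c : Omega1) (hab : a ≤ b) (hbc : b ≤ c) (x : S c),
      Sf a b hab (Sf b c hbc x) = Sf a c (hab.trans hbc) x)
    (hsurj : ∀ (a b : Omega1) (h : a ≤ b), Function.Surjective (Sf a b h))
    (hempty : IsEmpty {x : ∀ a, S a // ∀ (a b : Omega1) (h : a ≤ b), Sf a b h (x b) = x a}) :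
    ∃ (P : Omega1 → ModuleCat.{0} R)
      (φ : ∀ a b : Omega1, a ≤ b → (↥(P b) →ₗ[R] ↥(P a))),
      (∀ a, φ a a le_rfl = LinearMap.id) ∧
      (∀ (a b c : Omega1) (hab : a ≤ b) (hbc : b ≤ c),
        (φ a b hab).comp (φ b c hbc) = φ a c (hab.trans hbc)) ∧
      (∀ a, 𝓜 (P a)) ∧
      (∀ (a b : Omega1) (h : a ≤ b), Function.Surjective (φ a b h)) ∧
      Nonempty (A ≃ₗ[R] ↥(invLim (fun a => ↥(P a)) φ)) := by
  classical
  have pt : ∀ a, S a := fun a => (hne a).some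
  let G : ∀ a, Option ({pt a}ᶜ : Set (S a)) → ModuleCat.{0} R := fun a o => o.elim M fun _ => N
  choose P hP e using fun a => hsum _ (G a) (by rintro (_ | _) <;> assumption)
  let eQ : ∀ a, sumPullback f (S a) ≃ₗ[R] P a := fun a =>
    (sumPullbackEquiv f (pt a)).trans <|
      ((LinearEquiv.refl R M).prodCongr (finsuppLequivDFinsupp R)).trans <|
        (DirectSum.lequivProdDirectSum R (α := fun o => G a o)).symm.trans (e a).some
  let ψ a b h := sumPullbackMap f (Sf a b h)
  refine ⟨P, transportSystem ψ eQ, fun a => transportSystem_id eQ ?_,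
    fun a b c hab hbc => transportSystem_comp eQ hab hbc ?_, hP,
    fun a b h => transportSystem_surjective eQ h (sumPullbackMap_surjective f (hsurj a b h)), ⟨?_⟩⟩
  · change sumPullbackMap f (Sf a a le_rfl) = _
    rw [show Sf a a le_rfl = id from funext (hid a), sumPullbackMap_id]
  · change sumPullbackMap f _ ∘ₗ sumPullbackMap f _ = _
    rw [← sumPullbackMap_comp]
    exact congrArg _ (funext (hcomp a b c hab hbc))
  · exact (LinearEquiv.ofInjective g hg).trans <| (LinearEquiv.ofEq _ _ hexact).trans <|
      (LinearEquiv.ofBijective _ (kerToInvLimSumPullback_bijective f Sf Omega1.bddAbove_range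
        hid hcomp hempty)).trans (invLimTransportEquiv ψ eQ)
end
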